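/- arXiv:1205.7030 — 3 statements merged into one kernel-verified Lean document; each statement's English description precedes it below -/
import Mathlib

section
/- Let r > 0, v_max > 0, t_S > 0 be real constants and suppose 0 < D₀ < (v_max/r)·(1 − exp(−r·t_S)). Define D : ℝ → ℝ by D(t) = D₀·exp(r·t) + (v_max/r)·(1 − exp(r·t)) and set t_D := (1/r)·ln(v_max/(v_max − r·D₀)). Then 0 < t_D < t_S and D(t_D) = 0. -/
/-! The debt vanishes exactly when `exp (r t) * (vmax - r D₀) = vmax`, which defines `t_D`. The
hypothesis on `D₀` rearranges to `vmax * exp (-r tS) < vmax - r D₀`; this makes the gap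
`vmax - r D₀` positive, so `t_D` is well defined and positive, and it is exactly
`exp (r t_D) < exp (r tS)`. -/

open Real

noncomputable def repaymentTime (r vmax D₀ : ℝ) : ℝ := (1 / r) * log (vmax / (vmax - r * D₀))

lemma one_div_mul_log_lt_iff {r x T : ℝ} (hr : 0 < r) (hx : 0 < x) :
    (1 / r) * log x < T ↔ x < exp (r * T) := by
  rw [one_div_mul_eq_div, div_lt_iff₀' hr, log_lt_iff_lt_exp hx]

lemma div_lt_exp_iff_mul_exp_neg_lt {a c T : ℝ} (hc : 0 < c) :
    a / c < exp T ↔ a * exp (-T) < c := by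
  rw [div_lt_iff₀ hc, exp_neg, ← div_eq_mul_inv, div_lt_iff₀ (exp_pos T), mul_comm]

section repaymentTime

variable {r vmax D₀ : ℝ}

lemma lt_div_mul_one_sub_exp_iff (hr : 0 < r) {T : ℝ} :
    D₀ < vmax / r * (1 - exp (-r * T)) ↔ vmax * exp (-r * T) < vmax - r * D₀ := by
  rw [div_mul_eq_mul_div, lt_div_iff₀' hr]
  constructor <;> intro h <;> linarith

lemma exp_mul_repaymentTime (hr : r ≠ 0) (hratio : 0 < vmax / (vmax - r * D₀)) :
    exp (r * repaymentTime r vmax D₀) = vmax / (vmax - r * D₀) := by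
  rw [repaymentTime, ← mul_assoc, mul_one_div_cancel hr, one_mul, exp_log hratio]

lemma repaymentTime_pos (hr : 0 < r) (hD₀ : 0 < D₀) (hgap : 0 < vmax - r * D₀) :
    0 < repaymentTime r vmax D₀ := by
  have hratio : 1 < vmax / (vmax - r * D₀) :=
    (one_lt_div hgap).2 (sub_lt_self _ (mul_pos hr hD₀))
  exact mul_pos (one_div_pos.2 hr) (log_pos hratio)

lemma repaymentTime_lt_iff (hr : 0 < r) (hv : 0 < vmax) (hgap : 0 < vmax - r * D₀) {T : ℝ} :
    repaymentTime r vmax D₀ < T ↔ vmax * exp (-r * T) < vmax - r * D₀ := by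
  rw [repaymentTime, one_div_mul_log_lt_iff hr (div_pos hv hgap),
    div_lt_exp_iff_mul_exp_neg_lt hgap, neg_mul]

lemma mul_add_div_mul_one_sub_eq_zero (hr : r ≠ 0) {E : ℝ} (hE : E * (vmax - r * D₀) = vmax) :
    D₀ * E + vmax / r * (1 - E) = 0 := by
  field_simp
  linear_combination -hE

end repaymentTime

theorem stmt_5_general (r vmax tS D₀ : ℝ) (hr : 0 < r) (hv : 0 < vmax)
    (hD₀ : 0 < D₀) (hD₀' : D₀ < (vmax / r) * (1 - Real.exp (-r * tS)))
    (D : ℝ → ℝ)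
    (hD : ∀ t, D t = D₀ * Real.exp (r * t) + (vmax / r) * (1 - Real.exp (r * t))) :
    0 < (1 / r) * Real.log (vmax / (vmax - r * D₀)) ∧
    (1 / r) * Real.log (vmax / (vmax - r * D₀)) < tS ∧
    D ((1 / r) * Real.log (vmax / (vmax - r * D₀))) = 0 := by
  change 0 < repaymentTime r vmax D₀ ∧ repaymentTime r vmax D₀ < tS ∧
    D (repaymentTime r vmax D₀) = 0
  have hmargin := (lt_div_mul_one_sub_exp_iff hr).1 hD₀'
  have hgap : 0 < vmax - r * D₀ := (mul_pos hv (exp_pos _)).trans hmargin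
  refine ⟨repaymentTime_pos hr hD₀ hgap, (repaymentTime_lt_iff hr hv hgap).2 hmargin, ?_⟩
  rw [hD]
  refine mul_add_div_mul_one_sub_eq_zero hr.ne' ?_
  rw [exp_mul_repaymentTime hr.ne' (div_pos hv hgap), div_mul_cancel₀ _ hgap.ne']

theorem stmt_5 (r vmax tS D₀ : ℝ) (hr : 0 < r) (hv : 0 < vmax) (htS : 0 < tS)
    (hD₀ : 0 < D₀) (hD₀' : D₀ < (vmax / r) * (1 - Real.exp (-r * tS)))
    (D : ℝ → ℝ)
    (hD : ∀ t, D t = D₀ * Real.exp (r * t) + (vmax / r) * (1 - Real.exp (r * t))) :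
    0 < (1 / r) * Real.log (vmax / (vmax - r * D₀)) ∧
    (1 / r) * Real.log (vmax / (vmax - r * D₀)) < tS ∧
    D ((1 / r) * Real.log (vmax / (vmax - r * D₀))) = 0 :=
  stmt_5_general r vmax tS D₀ hr hv hD₀ hD₀' D hD
end

section
/- Let r, v_max, A, w_max, t_S be positive real constants and let D₀ satisfy D₀ > (v_max/r)·(1 − exp(−r·t_S)), v_max > A·w_max, and v_max − r·D₀ − A·w_max·exp(−r·t_S) > 0. Define D : ℝ → ℝ piecewise by D(t) = D₀·exp(r·t) + (v_max/r)·(1 − exp(r·t)) for t ≤ t_S, and D(t) = (D₀ + (A·w_max·exp(−r·t_S) − v_max)/r)·exp(r·t) + (v_max − A·w_max)/r for t ≥ t_S. Then D is continuous at t_S, D′(t) = r·D(t) − v_max for all t < t_S, D′(t) = r·D(t) + A·w_max − v_max for all t > t_S, and t_D := (1/r)·ln((v_max − A·w_max)/(v_max − r·D₀ − A·w_max·exp(−r·t_S))) satisfies t_D > t_S and D(t_D) = 0. -/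
/-!
On each side of `tS` the debt has the form `c * exp (r * t) + d`, which solves `ẏ = r * y - r * d`;
this gives both differential equations. The second piece vanishes where `exp (r * t) = -d / c`,
which is the stated `t_D`, and `tS < t_D` means `exp (r * tS) < -d / c`, the lower bound on `D₀`
multiplied through by `exp (r * tS)`.
-/

open Real Set Filter Topology

lemma hasDerivAt_mul_exp_add (c d r t : ℝ) :
    HasDerivAt (fun t => c * exp (r * t) + d) (r * (c * exp (r * t) + d) - r * d) t := by
  refine ((((hasDerivAt_id t).const_mul r).exp.const_mul c).add_const d).congr_deriv ?_
  simp only [id_eq, mul_one]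
  ring

lemma continuousAt_of_eqOn_Iic_of_eqOn_Ici {D f g : ℝ → ℝ} {a : ℝ}
    (hf : ContinuousAt f a) (hg : ContinuousAt g a)
    (hDf : EqOn D f (Iic a)) (hDg : EqOn D g (Ici a)) : ContinuousAt D a := by
  rw [continuousAt_iff_continuous_left_right]
  exact ⟨hf.continuousWithinAt.congr hDf (hDf self_mem_Iic),
    hg.continuousWithinAt.congr hDg (hDg self_mem_Ici)⟩

lemma exp_mul_one_div_mul_log {r K : ℝ} (hr : r ≠ 0) (hK : 0 < K) :
    exp (r * (1 / r * log K)) = K := by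
  rw [← mul_assoc, mul_one_div_cancel hr, one_mul, exp_log hK]

lemma lt_one_div_mul_log_of_exp_mul_lt {r s K : ℝ} (hr : 0 < r) (h : exp (r * s) < K) :
    s < 1 / r * log K := by
  have := (lt_log_iff_exp_lt (exp_pos _ |>.trans h)).2 h
  rw [one_div_mul_eq_div, lt_div_iff₀ hr]
  linarith

lemma exp_mul_lt_div {r v a D₀ s : ℝ} (hr : 0 < r)
    (hD₀ : v / r * (1 - exp (-r * s)) < D₀) (hden : 0 < v - r * D₀ - a * exp (-r * s)) :
    exp (r * s) < (v - a) / (v - r * D₀ - a * exp (-r * s)) := by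
  have hinv : exp (r * s) * exp (-r * s) = 1 := by rw [← exp_add]; simp
  have hrD₀ : v * (1 - exp (-r * s)) < r * D₀ := by
    rwa [div_mul_eq_mul_div, div_lt_iff₀ hr, mul_comm D₀] at hD₀
  rw [lt_div_iff₀ hden]
  have hx := mul_lt_mul_of_pos_left hrD₀ (exp_pos (r * s))
  linear_combination hx + (v - a) * hinv

theorem stmt_6_general (r vmax A wmax tS D₀ : ℝ)
    (hr : 0 < r)
    (hD₀ : (vmax / r) * (1 - Real.exp (-r * tS)) < D₀)
    (h2 : 0 < vmax - r * D₀ - A * wmax * Real.exp (-r * tS))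
    (D : ℝ → ℝ)
    (hD1 : ∀ t ≤ tS,
      D t = D₀ * Real.exp (r * t) + (vmax / r) * (1 - Real.exp (r * t)))
    (hD2 : ∀ t ≥ tS,
      D t = (D₀ + (A * wmax * Real.exp (-r * tS) - vmax) / r) * Real.exp (r * t)
            + (vmax - A * wmax) / r) :
    ContinuousAt D tS ∧
    (∀ t < tS, HasDerivAt D (r * D t - vmax) t) ∧
    (∀ t > tS, HasDerivAt D (r * D t + A * wmax - vmax) t) ∧
    tS < (1 / r) * Real.log ((vmax - A * wmax) / (vmax - r * D₀ - A * wmax * Real.exp (-r * tS))) ∧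
    D ((1 / r) * Real.log ((vmax - A * wmax) / (vmax - r * D₀ - A * wmax * Real.exp (-r * tS)))) = 0 := by
  have hr0 : r ≠ 0 := hr.ne'
  set K := (vmax - A * wmax) / (vmax - r * D₀ - A * wmax * exp (-r * tS))
  have hD1' : EqOn D (fun t => (D₀ - vmax / r) * exp (r * t) + vmax / r) (Iic tS) :=
    fun t ht => by rw [hD1 t ht]; ring
  have hD2' : EqOn D (fun t => (D₀ + (A * wmax * exp (-r * tS) - vmax) / r) * exp (r * t)
      + (vmax - A * wmax) / r) (Ici tS) :=
    fun t ht => hD2 t ht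
  have hexpK : exp (r * tS) < K := exp_mul_lt_div hr hD₀ h2
  have htD : tS < 1 / r * log K := lt_one_div_mul_log_of_exp_mul_lt hr hexpK
  refine ⟨continuousAt_of_eqOn_Iic_of_eqOn_Ici (by fun_prop) (by fun_prop) hD1' hD2',
    fun t ht => ?_, fun t ht => ?_, htD, ?_⟩
  · refine ((hasDerivAt_mul_exp_add _ _ r t).congr_of_eventuallyEq
      (eventuallyEq_of_mem (Iic_mem_nhds ht) hD1')).congr_deriv ?_
    rw [hD1' ht.le]
    field_simp
  · refine ((hasDerivAt_mul_exp_add _ _ r t).congr_of_eventuallyEq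
      (eventuallyEq_of_mem (Ici_mem_nhds ht) hD2')).congr_deriv ?_
    rw [hD2' ht.le]
    field_simp
    ring
  · have hK : K * (vmax - r * D₀ - A * wmax * exp (-r * tS)) = vmax - A * wmax :=
      div_mul_cancel₀ _ h2.ne'
    rw [hD2 _ htD.le, exp_mul_one_div_mul_log hr0 ((exp_pos _).trans hexpK)]
    clear_value K
    linear_combination (-1 / r) * hK - K * D₀ * mul_inv_cancel₀ hr0

theorem stmt_6 (r vmax A wmax tS D₀ : ℝ)
    (hr : 0 < r) (hv : 0 < vmax) (hA : 0 < A) (hw : 0 < wmax) (htS : 0 < tS)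
    (hD₀ : (vmax / r) * (1 - Real.exp (-r * tS)) < D₀)
    (h1 : A * wmax < vmax)
    (h2 : 0 < vmax - r * D₀ - A * wmax * Real.exp (-r * tS))
    (D : ℝ → ℝ)
    (hD1 : ∀ t ≤ tS,
      D t = D₀ * Real.exp (r * t) + (vmax / r) * (1 - Real.exp (r * t)))
    (hD2 : ∀ t ≥ tS,
      D t = (D₀ + (A * wmax * Real.exp (-r * tS) - vmax) / r) * Real.exp (r * t)
            + (vmax - A * wmax) / r) :
    ContinuousAt D tS ∧
    (∀ t < tS, HasDerivAt D (r * D t - vmax) t) ∧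
    (∀ t > tS, HasDerivAt D (r * D t + A * wmax - vmax) t) ∧
    tS < (1 / r) * Real.log ((vmax - A * wmax) / (vmax - r * D₀ - A * wmax * Real.exp (-r * tS))) ∧
    D ((1 / r) * Real.log ((vmax - A * wmax) / (vmax - r * D₀ - A * wmax * Real.exp (-r * tS)))) = 0 :=
  stmt_6_general r vmax A wmax tS D₀ hr hD₀ h2 D hD1 hD2
end

section
/- Let r > 0, t_S > 0, and let p, w_max, B, N₀, D₀ be real constants with p·w_max > B and D₀ − N₀ = ((p·w_max − B)/r)·(1 − exp(−r·t_S)). Define D : ℝ → ℝ by D(t) = (D₀ − N₀)·exp(r·t) + ((p·w_max − B)/r)·(1 − exp(r·t)). Then D(0) = D₀ − N₀, D′(t) = r·D(t) − (p·w_max − B) for every t ∈ ℝ, D(t_S) = 0, and D(t) > 0 for all t ∈ [0, t_S). (Hence t_D = t_S.) -/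
/-!
With `c = p w_max - B > 0`, the choice of `D₀ - N₀` is exactly the one that turns `D` into
`(c/r)(1 - e^{r(t - t_S)})`, which vanishes at `t_S` and is positive before it.
-/

open Real

lemma hasDerivAt_mul_exp_add_div_mul_one_sub_exp {r : ℝ} (hr : r ≠ 0) (y₀ c t : ℝ) :
    HasDerivAt (fun t => y₀ * exp (r * t) + c / r * (1 - exp (r * t)))
      (r * (y₀ * exp (r * t) + c / r * (1 - exp (r * t))) - c) t := by
  have hexp : HasDerivAt (fun t => exp (r * t)) (exp (r * t) * r) t := by
    simpa using ((hasDerivAt_id t).const_mul r).exp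
  refine ((hexp.const_mul y₀).add ((hexp.const_sub 1).const_mul (c / r))).congr_deriv ?_
  field_simp
  ring

lemma one_sub_exp_neg_mul_mul_exp_add_one_sub_exp (r T t : ℝ) :
    (1 - exp (-r * T)) * exp (r * t) + (1 - exp (r * t)) = 1 - exp (r * (t - T)) := by
  rw [show r * (t - T) = -r * T + r * t by ring, exp_add]
  ring

theorem stmt_15_general (r tS p wmax B N₀ D₀ : ℝ) (hr : 0 < r)
    (hpB : B < p * wmax)
    (hD₀ : D₀ - N₀ = ((p * wmax - B) / r) * (1 - Real.exp (-r * tS)))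
    (D : ℝ → ℝ)
    (hD : ∀ t, D t = (D₀ - N₀) * Real.exp (r * t)
          + ((p * wmax - B) / r) * (1 - Real.exp (r * t))) :
    D 0 = D₀ - N₀ ∧
    (∀ t : ℝ, HasDerivAt D (r * D t - (p * wmax - B)) t) ∧
    D tS = 0 ∧
    (∀ t ∈ Set.Ico (0:ℝ) tS, 0 < D t) := by
  have hD_shift : ∀ t, D t = (p * wmax - B) / r * (1 - exp (r * (t - tS))) := fun t => by
    rw [hD, hD₀, ← one_sub_exp_neg_mul_mul_exp_add_one_sub_exp]
    ring
  refine ⟨by simp [hD], fun t => ?_, by simp [hD_shift], fun t ht => ?_⟩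
  · have hderiv := hasDerivAt_mul_exp_add_div_mul_one_sub_exp hr.ne' (D₀ - N₀) (p * wmax - B) t
    rwa [← funext hD, ← hD t] at hderiv
  · rw [hD_shift]
    refine mul_pos (div_pos (sub_pos.2 hpB) hr) (sub_pos.2 (exp_lt_one_iff.2 ?_))
    exact mul_neg_of_pos_of_neg hr (sub_neg.2 ht.2)

theorem stmt_15 (r tS p wmax B N₀ D₀ : ℝ) (hr : 0 < r) (htS : 0 < tS)
    (hpB : B < p * wmax)
    (hD₀ : D₀ - N₀ = ((p * wmax - B) / r) * (1 - Real.exp (-r * tS)))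
    (D : ℝ → ℝ)
    (hD : ∀ t, D t = (D₀ - N₀) * Real.exp (r * t)
          + ((p * wmax - B) / r) * (1 - Real.exp (r * t))) :
    D 0 = D₀ - N₀ ∧
    (∀ t : ℝ, HasDerivAt D (r * D t - (p * wmax - B)) t) ∧
    D tS = 0 ∧
    (∀ t ∈ Set.Ico (0:ℝ) tS, 0 < D t) :=
  stmt_15_general r tS p wmax B N₀ D₀ hr hpB hD₀ D hD
end
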